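/- (The Kullback–Leibler divergence is the α → 0 limit of the density power divergence.) Let g = (g_1,...,g_m) and f = (f_1,...,f_m) be probability vectors on a finite set with all entries strictly positive. Then lim_{α → 0+} d_α(g,f) = Σ_{j=1}^m g_j log(g_j/f_j), the Kullback–Leibler divergence d_0(g,f). -/
import Mathlib


open Finset Filter

/-- The density power divergence with tuning parameter `α > 0` between two
probability vectors `g` and `f` on the finite set `Fin m`. -/
noncomputable def dpd (α : ℝ) {m : ℕ} (g f : Fin m → ℝ) : ℝ :=
  ∑ j, (f j ^ (1 + α) - (1 + 1 / α) * f j ^ α * g j + (1 / α) * g j ^ (1 + α))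

lemma rpow_slope_tendsto (x y : ℝ) (hx : 0 < x) (hy : 0 < y) :
    Tendsto (fun α : ℝ => (x ^ α - y ^ α) / α) (nhdsWithin 0 (Set.Ioi 0))
      (nhds (Real.log x - Real.log y)) := by
  have h1 : HasDerivAt (fun α : ℝ => x ^ α) (Real.log x) 0 := by
    have : HasDerivAt (fun α : ℝ => Real.exp (Real.log x * α)) (Real.log x) 0 := by
      simpa using ((hasDerivAt_id (0:ℝ)).const_mul (Real.log x)).exp
    refine this.congr_of_eventuallyEq ?_
    filter_upwards with α
    rw [Real.rpow_def_of_pos hx]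
  have h2 : HasDerivAt (fun α : ℝ => y ^ α) (Real.log y) 0 := by
    have : HasDerivAt (fun α : ℝ => Real.exp (Real.log y * α)) (Real.log y) 0 := by
      simpa using ((hasDerivAt_id (0:ℝ)).const_mul (Real.log y)).exp
    refine this.congr_of_eventuallyEq ?_
    filter_upwards with α
    rw [Real.rpow_def_of_pos hy]
  have h := (h1.sub h2)
  rw [hasDerivAt_iff_tendsto_slope] at h
  have h' := h.mono_left (nhdsWithin_mono 0 (fun a ha => ne_of_gt ha))
  refine h'.congr' ?_
  filter_upwards [self_mem_nhdsWithin] with α (hα : α ∈ Set.Ioi (0:ℝ))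
  simp [slope_def_field, div_eq_mul_inv, mul_comm]


/-- **The Kullback–Leibler divergence is the `α → 0+` limit of the density power
divergence.**  For probability vectors `g`, `f` on a finite set with strictly
positive entries, `lim_{α → 0+} d_α(g,f) = ∑_j g_j log(g_j/f_j) = d_0(g,f)`. -/
theorem dpd_tendsto_kl {m : ℕ} (g f : Fin m → ℝ)
    (hg : ∀ j, 0 < g j) (hf : ∀ j, 0 < f j)
    (hgs : ∑ j, g j = 1) (hfs : ∑ j, f j = 1) :
    Tendsto (fun α => dpd α g f) (nhdsWithin 0 (Set.Ioi 0))
      (nhds (∑ j, g j * Real.log (g j / f j))) := by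
  unfold dpd
  have key : ∀ j, Tendsto (fun α : ℝ => f j ^ (1 + α) - (1 + 1 / α) * f j ^ α * g j + (1 / α) * g j ^ (1 + α))
      (nhdsWithin 0 (Set.Ioi 0)) (nhds (f j - g j + g j * (Real.log (g j) - Real.log (f j)))) := by
    intro j
    have hfc : Tendsto (fun α : ℝ => f j ^ α) (nhdsWithin 0 (Set.Ioi 0)) (nhds 1) := by
      have := (Real.continuousAt_const_rpow (b := (0:ℝ)) (ne_of_gt (hf j)))
      simpa [Real.rpow_zero] using this.continuousWithinAt.tendsto
    have hslope := rpow_slope_tendsto (g j) (f j) (hg j) (hf j)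
    have hmain : Tendsto (fun α : ℝ => f j * f j ^ α - g j * f j ^ α + g j * ((g j ^ α - f j ^ α) / α))
        (nhdsWithin 0 (Set.Ioi 0)) (nhds (f j * 1 - g j * 1 + g j * (Real.log (g j) - Real.log (f j)))) :=
      ((hfc.const_mul (f j)).sub (hfc.const_mul (g j))).add (hslope.const_mul (g j))
    rw [mul_one, mul_one] at hmain
    refine hmain.congr' ?_
    filter_upwards [self_mem_nhdsWithin] with α (hα : α ∈ Set.Ioi (0:ℝ))
    have hα0 : α ≠ 0 := ne_of_gt hα
    rw [Real.rpow_add (hf j), Real.rpow_add (hg j), Real.rpow_one, Real.rpow_one]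
    field_simp
    ring
  have := tendsto_finset_sum Finset.univ (fun j _ => key j)
  convert this using 2
  have hlog : ∀ j : Fin m, g j * Real.log (g j / f j) = g j * (Real.log (g j) - Real.log (f j)) := by
    intro j; rw [Real.log_div (ne_of_gt (hg j)) (ne_of_gt (hf j))]
  simp only [hlog]
  rw [Finset.sum_add_distrib, Finset.sum_sub_distrib, hgs, hfs]
  ring
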